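/- With notation as above, tr(Σ̂⁻¹ Σ̂_j) = p + a_j' Y (Y'QY)⁻¹ Y' a_j, provided Y'QY is invertible. -/
import Mathlib


open Matrix

lemma vecMulVec_mul' {m n p : Type*} [Fintype n] (u : m → ℝ) (v : n → ℝ)
    (M : Matrix n p ℝ) : vecMulVec u v * M = vecMulVec u (v ᵥ* M) := by
  ext i j
  simp [mul_apply, vecMulVec_apply, vecMul, dotProduct, Finset.mul_sum, mul_assoc]

lemma mul_vecMulVec' {m n p : Type*} [Fintype n] (M : Matrix m n ℝ) (u : n → ℝ)
    (v : p → ℝ) : M * vecMulVec u v = vecMulVec (M *ᵥ u) v := by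
  ext i j
  simp [mul_apply, vecMulVec_apply, mulVec, dotProduct, Finset.sum_mul, mul_assoc]

lemma vecMulVec_mulVec' {m n : Type*} [Fintype n] (u : m → ℝ) (v x : n → ℝ) :
    vecMulVec u v *ᵥ x = (v ⬝ᵥ x) • u := by
  ext i
  simp only [mulVec, vecMulVec_apply, dotProduct, Pi.smul_apply, smul_eq_mul,
    Finset.sum_mul]
  exact Finset.sum_congr rfl fun r _ => by ring

lemma trace_mul_vecMulVec' {n : Type*} [Fintype n] (A : Matrix n n ℝ) (u v : n → ℝ) :
    trace (A * vecMulVec u v) = v ⬝ᵥ (A *ᵥ u) := by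
  simp only [trace, diag, mul_apply, vecMulVec_apply, dotProduct, mulVec, Finset.mul_sum]
  refine Finset.sum_congr rfl fun i _ => Finset.sum_congr rfl fun r _ => by ring

lemma vecMulVec_transpose' {m n : Type*} (u : m → ℝ) (v : n → ℝ) :
    (vecMulVec u v)ᵀ = vecMulVec v u := by
  ext i j; simp [vecMulVec_apply, mul_comm]

/-- `tr(Σ̂⁻¹ Σ̂ⱼ) = p + aⱼ' Y (Y'QY)⁻¹ Y' aⱼ` when `Y'QY` is positive
definite. -/
theorem stmt5 {n p k : ℕ} (Y : Matrix (Fin n) (Fin p) ℝ)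
    (X : Matrix (Fin n) (Fin (k + 1)) ℝ) (j : Fin (k + 1))
    (hXfull : IsUnit (Xᵀ * X).det)
    (Xj : Matrix (Fin n) (Fin k) ℝ) (hXj : Xj = X.submatrix id j.succAbove)
    (hXjfull : IsUnit (Xjᵀ * Xj).det)
    (Q Qj : Matrix (Fin n) (Fin n) ℝ)
    (hQ : Q = 1 - X * (Xᵀ * X)⁻¹ * Xᵀ)
    (hQj : Qj = 1 - Xj * (Xjᵀ * Xj)⁻¹ * Xjᵀ)
    (xj : Fin n → ℝ) (hxj : xj = fun i => X i j)
    (hnz : Qj.mulVec xj ≠ 0)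
    (a : Fin n → ℝ)
    (ha : a = fun i => (Qj.mulVec xj) i / Real.sqrt (∑ r, (Qj.mulVec xj) r ^ 2))
    (Shat Shatj : Matrix (Fin p) (Fin p) ℝ)
    (hShat : Shat = (n : ℝ)⁻¹ • (Yᵀ * Q * Y))
    (hShatj : Shatj = (n : ℝ)⁻¹ • (Yᵀ * Qj * Y))
    (hPD : (Yᵀ * Q * Y).PosDef) :
    Matrix.trace (Shat⁻¹ * Shatj)
      = (p : ℝ) + (Yᵀ *ᵥ a) ⬝ᵥ ((Yᵀ * Q * Y)⁻¹ *ᵥ (Yᵀ *ᵥ a)) := by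
  -- basic setup
  have hn : (n : ℝ) ≠ 0 := by
    rcases Nat.eq_zero_or_pos n with h | h
    · exfalso; apply hnz; subst h; funext i; exact i.elim0
    · exact_mod_cast h.ne'
  set w : Fin n → ℝ := Qj *ᵥ xj with hw
  set t : ℝ := w ⬝ᵥ w with ht
  have hA : (Xjᵀ * Xj) * (Xjᵀ * Xj)⁻¹ = 1 := mul_nonsing_inv _ hXjfull
  have hA' : (Xjᵀ * Xj)⁻¹ * (Xjᵀ * Xj) = 1 := nonsing_inv_mul _ hXjfull
  have hB' : (Xᵀ * X)⁻¹ * (Xᵀ * X) = 1 := nonsing_inv_mul _ hXfull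
  set Pj : Matrix (Fin n) (Fin n) ℝ := Xj * (Xjᵀ * Xj)⁻¹ * Xjᵀ with hPjdef
  set P : Matrix (Fin n) (Fin n) ℝ := X * (Xᵀ * X)⁻¹ * Xᵀ with hPdef
  -- symmetry
  have hPjsymm : Pjᵀ = Pj := by
    rw [hPjdef]
    simp only [transpose_mul, transpose_transpose, transpose_nonsing_inv,
      Matrix.mul_assoc]
  have hPsymm : Pᵀ = P := by
    rw [hPdef]
    simp only [transpose_mul, transpose_transpose, transpose_nonsing_inv,
      Matrix.mul_assoc]
  -- projection identities
  have hPjXj : Pj * Xj = Xj := by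
    nth_rewrite 1 [hPjdef]
    rw [Matrix.mul_assoc, Matrix.mul_assoc, hA', Matrix.mul_one]
  have hXjtPj : Xjᵀ * Pj = Xjᵀ := by
    nth_rewrite 1 [hPjdef]
    rw [← Matrix.mul_assoc, ← Matrix.mul_assoc, hA, Matrix.one_mul]
  have hPjPj : Pj * Pj = Pj := by
    nth_rewrite 1 [hPjdef]
    rw [Matrix.mul_assoc, hXjtPj, ← hPjdef]
  have hPX : P * X = X := by
    nth_rewrite 1 [hPdef]
    rw [Matrix.mul_assoc, Matrix.mul_assoc, hB', Matrix.mul_one]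
  -- facts about w
  have hwe : w = xj - Pj *ᵥ xj := by
    rw [hw, hQj, sub_mulVec, one_mulVec, hPjdef]
  have hXjtw : Xjᵀ *ᵥ w = 0 := by
    rw [hwe, mulVec_sub, mulVec_mulVec, hXjtPj, sub_self]
  have hPjw : Pj *ᵥ w = 0 := by
    rw [hwe, mulVec_sub, mulVec_mulVec, hPjPj, sub_self]
  have hwxj : w ⬝ᵥ xj = t := by
    have h1 : w ⬝ᵥ (Pj *ᵥ xj) = 0 := by
      rw [dotProduct_mulVec, ← mulVec_transpose, hPjsymm, hPjw, zero_dotProduct]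
    have := congrArg (fun v => w ⬝ᵥ v) hwe
    simp only [dotProduct_sub, h1, sub_zero] at this
    rw [← ht] at this
    exact this.symm
  have htsum : ∑ r, w r ^ 2 = t := by
    rw [ht]; simp [dotProduct, sq]
  have htpos : 0 < t := by
    rw [← htsum]
    obtain ⟨r, hr⟩ : ∃ r, w r ≠ 0 := by
      by_contra h
      push_neg at h
      exact hnz (funext h)
    exact Finset.sum_pos' (fun i _ => sq_nonneg _)
      ⟨r, Finset.mem_univ r, by positivity⟩
  have htne : t ≠ 0 := htpos.ne'
  -- the rank-one update matrix
  set R : Matrix (Fin n) (Fin n) ℝ := Pj + t⁻¹ • vecMulVec w w with hRdef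
  have hRsymm : Rᵀ = R := by
    rw [hRdef, transpose_add, transpose_smul, vecMulVec_transpose', hPjsymm]
  -- P * R = R
  have hPXj : P * Xj = Xj := by
    have : P * Xj = (P * X).submatrix id j.succAbove := by
      subst hXj
      ext i i'
      simp [mul_apply, submatrix_apply]
    rw [this, hPX, ← hXj]
  have hPxj : P *ᵥ xj = xj := by
    have : P *ᵥ xj = fun i => (P * X) i j := by
      subst hxj
      ext i
      simp [mulVec, dotProduct, mul_apply]
    rw [this, hPX, ← hxj]
  have hPPj : P * Pj = Pj := by
    nth_rewrite 1 [hPjdef]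
    rw [← Matrix.mul_assoc, ← Matrix.mul_assoc, hPXj, ← hPjdef]
  have hPw : P *ᵥ w = w := by
    rw [hwe, mulVec_sub, hPxj, mulVec_mulVec, hPPj]
  have hPR : P * R = R := by
    rw [hRdef, mul_add, hPPj, Matrix.mul_smul, mul_vecMulVec', hPw]
  -- R * X = X
  have hRXj : R * Xj = Xj := by
    have h0 : w ᵥ* Xj = 0 := by rw [← mulVec_transpose, hXjtw]
    have h1 : vecMulVec w w * Xj = 0 := by
      rw [vecMulVec_mul', h0]
      ext i i'; simp [vecMulVec_apply]
    rw [hRdef, Matrix.add_mul, hPjXj, Matrix.smul_mul, h1, smul_zero, add_zero]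
  have hRxj : R *ᵥ xj = xj := by
    have h1 : Pj *ᵥ xj = xj - w := by rw [hwe]; abel
    rw [hRdef, add_mulVec, h1, smul_mulVec, vecMulVec_mulVec', hwxj,
      smul_smul, inv_mul_cancel₀ htne, one_smul]
    abel
  have hRX : R * X = X := by
    ext i s
    rcases eq_or_ne s j with hs | hs
    · rw [hs]
      have h1 : (R * X) i j = (R *ᵥ xj) i := by
        simp [mul_apply, mulVec, dotProduct, hxj]
      rw [h1, hRxj, hxj]
    · obtain ⟨i', rfl⟩ := Fin.exists_succAbove_eq hs
      have h1 : (R * X) i (j.succAbove i') = (R * Xj) i i' := by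
        simp [mul_apply, submatrix_apply, hXj]
      rw [h1, hRXj, hXj]
      simp
  have hRP : R * P = P := by
    nth_rewrite 1 [hPdef]
    rw [← Matrix.mul_assoc, ← Matrix.mul_assoc, hRX, ← hPdef]
  -- conclude P = R
  have hPeqR : P = R := by
    have h2 : P * R = P := by
      have := congrArg Matrix.transpose hRP
      rwa [transpose_mul, hPsymm, hRsymm] at this
    rw [← h2, hPR]
  -- Qj = Q + t⁻¹ • w wᵀ
  have hQjQ : Qj = Q + t⁻¹ • vecMulVec w w := by
    rw [hQj, hQ, hPeqR, hRdef]
    abel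
  -- pass to the Y-level
  set b : Fin p → ℝ := Yᵀ *ᵥ w with hb
  have hbb : Yᵀ * vecMulVec w w * Y = vecMulVec b b := by
    rw [mul_vecMulVec', vecMulVec_mul', ← mulVec_transpose, hb]
  set G : Matrix (Fin p) (Fin p) ℝ := Yᵀ * Q * Y with hGdef
  have hGdet : IsUnit G.det := hPD.det_pos.ne'.isUnit
  have hGG : G * G⁻¹ = 1 := mul_nonsing_inv _ hGdet
  have hYQjY : Yᵀ * Qj * Y = G + t⁻¹ • vecMulVec b b := by
    rw [hQjQ, Matrix.mul_add, Matrix.add_mul, ← hGdef, Matrix.mul_smul,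
      Matrix.smul_mul, hbb]
  -- invert Shat
  have hSinv : Shat⁻¹ = (n : ℝ) • G⁻¹ := by
    apply inv_eq_right_inv
    rw [hShat, Matrix.smul_mul, Matrix.mul_smul, smul_smul,
      inv_mul_cancel₀ hn, hGG, one_smul]
  have hSS : Shat⁻¹ * Shatj = 1 + t⁻¹ • (G⁻¹ * vecMulVec b b) := by
    rw [hSinv, hShatj, hYQjY, Matrix.smul_mul, Matrix.mul_smul, smul_smul,
      mul_inv_cancel₀ hn, one_smul, mul_add, nonsing_inv_mul _ hGdet, Matrix.mul_smul]
  -- compute the trace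
  have htr : Matrix.trace (Shat⁻¹ * Shatj) = (p : ℝ) + t⁻¹ * (b ⬝ᵥ (G⁻¹ *ᵥ b)) := by
    rw [hSS, trace_add, trace_smul, trace_one, trace_mul_vecMulVec']
    simp
  -- compute the right-hand side
  have haw : a = (Real.sqrt t)⁻¹ • w := by
    rw [ha]
    funext i
    rw [htsum]
    simp [div_eq_inv_mul]
  have hYa : Yᵀ *ᵥ a = (Real.sqrt t)⁻¹ • b := by
    rw [haw, mulVec_smul, hb]
  have hsq : (Real.sqrt t)⁻¹ * (Real.sqrt t)⁻¹ = t⁻¹ := by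
    rw [← mul_inv]
    congr 1
    exact Real.mul_self_sqrt htpos.le
  rw [htr, hYa, mulVec_smul, smul_dotProduct, dotProduct_smul, smul_eq_mul,
    smul_eq_mul, ← mul_assoc, hsq]
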